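/- arXiv:1911.08984 — 2 statements merged into one kernel-verified Lean document; each statement's English description precedes it below -/
import Mathlib

section
/- If A is an endomorphism of X commuting with every member of 𝒯 and f : D → [-∞,+∞) is 𝒯-quasiconvex on a 𝒯-convex set D, then f ∘ A is 𝒯-quasiconvex on A⁻¹(D), and the function f ∘ A⁻¹ : A(D) → [-∞,+∞) defined by (f ∘ A⁻¹)(x) := inf { f(u) : u ∈ D, A(u) = x } is 𝒯-quasiconvex on A(D). -/
/-!
`f ∘ A` is handled by transporting `T`-combinations along `A`, which is possible since `A`
is additive and commutes with each `T ∈ 𝒯`. For the fibre infimum, if `A u = x` and `A v = y`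
with `u, v ∈ D`, then `T u + (v - T v)` lies in `D` and in the fibre over `T x + (y - T y)`,
so the infimum there is at most `max (f u) (f v)`; taking infima over `u` and `v` (an infimum
distributes over `max` in a complete linear order) gives the claim, even on all of `X`.
-/

open Set

section TConvexity

variable {X β : Type*} [AddCommGroup X]

/-- `T x + (y - T y)` plays the role of the convex combination `t x + (1 - t) y`. -/
def TConvex (𝒯 : Set (X →+ X)) (D : Set X) : Prop :=
  ∀ T ∈ 𝒯, ∀ x ∈ D, ∀ y ∈ D, T x + (y - T y) ∈ D

def TQuasiconvexOn [LinearOrder β] (𝒯 : Set (X →+ X)) (D : Set X) (f : X → β) : Prop :=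
  ∀ T ∈ 𝒯, ∀ x ∈ D, ∀ y ∈ D, f (T x + (y - T y)) ≤ max (f x) (f y)

/-- `(f ∘ A⁻¹) x`: the infimum of `f` over the points of `D` that `A` maps to `x`. -/
noncomputable def fiberInf [CompleteLattice β] (D : Set X) (A : X →+ X) (f : X → β) (x : X) : β :=
  ⨅ u ∈ D, ⨅ (_ : A u = x), f u

variable {𝒯 : Set (X →+ X)} {D : Set X} {A : X →+ X}

theorem AddMonoidHom.map_add_sub_of_commute {T : X →+ X} (hAT : ∀ x, A (T x) = T (A x))
    (x y : X) : A (T x + (y - T y)) = T (A x) + (A y - T (A y)) := by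
  rw [map_add, map_sub, hAT, hAT]

theorem TQuasiconvexOn.comp_of_commute [LinearOrder β] {f : X → β} (hf : TQuasiconvexOn 𝒯 D f)
    (hA : ∀ T ∈ 𝒯, ∀ x, A (T x) = T (A x)) : TQuasiconvexOn 𝒯 (A ⁻¹' D) (f ∘ A) := by
  intro T hT x hx y hy
  simpa only [Function.comp_apply, A.map_add_sub_of_commute (hA T hT)] using hf T hT _ hx _ hy

theorem TQuasiconvexOn.fiberInf_of_commute [CompleteLinearOrder β] {f : X → β}
    (hD : TConvex 𝒯 D) (hf : TQuasiconvexOn 𝒯 D f) (hA : ∀ T ∈ 𝒯, ∀ x, A (T x) = T (A x)) :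
    TQuasiconvexOn 𝒯 univ (fiberInf D A f) := by
  intro T hT x _ y _
  change _ ≤ (⨅ u ∈ D, ⨅ (_ : A u = x), f u) ⊔ ⨅ v ∈ D, ⨅ (_ : A v = y), f v
  simp only [iInf_sup_eq, sup_iInf_eq]
  refine le_iInf₂ fun v hv => le_iInf fun hvy => le_iInf₂ fun u hu => le_iInf fun hux => ?_
  calc fiberInf D A f (T x + (y - T y)) ≤ f (T u + (v - T v)) :=
        iInf₂_le_of_le _ (hD T hT u hu v hv) <| iInf_le_of_le
          (by rw [A.map_add_sub_of_commute (hA T hT), hux, hvy]) le_rfl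
    _ ≤ max (f u) (f v) := hf T hT u hu v hv

theorem sInf_fiber_eq_fiberInf [CompleteLattice β] (D : Set X) (A : X →+ X)
    (f : X → β) (x : X) :
    sInf {m : β | ∃ u ∈ D, A u = x ∧ m = f u} = fiberInf D A f x := by
  have hset : {m : β | ∃ u ∈ D, A u = x ∧ m = f u} = f '' {u | u ∈ D ∧ A u = x} := by
    ext m
    simp only [mem_ofPred_eq, mem_image, and_assoc, eq_comm]
  rw [hset, sInf_image]
  simp only [fiberInf, mem_ofPred_eq, iInf_and]

end TConvexity

theorem stmt5_general {X : Type*} [AddCommGroup X] (𝒯 : Set (X →+ X)) (D : Set X)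
    (hD : ∀ T ∈ 𝒯, ∀ x ∈ D, ∀ y ∈ D, T x + (y - T y) ∈ D)
    (f : X → EReal)
    (hf : ∀ T ∈ 𝒯, ∀ x ∈ D, ∀ y ∈ D, f (T x + (y - T y)) ≤ max (f x) (f y))
    (A : X →+ X) (hA : ∀ T ∈ 𝒯, ∀ x : X, A (T x) = T (A x))
    (fAinv : X → EReal)
    (hfAinv : ∀ x, fAinv x = sInf {m : EReal | ∃ u ∈ D, A u = x ∧ m = f u}) :
    (∀ T ∈ 𝒯, ∀ x ∈ A ⁻¹' D, ∀ y ∈ A ⁻¹' D,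
      f (A (T x + (y - T y))) ≤ max (f (A x)) (f (A y))) ∧
    (∀ T ∈ 𝒯, ∀ x ∈ A '' D, ∀ y ∈ A '' D,
      fAinv (T x + (y - T y)) ≤ max (fAinv x) (fAinv y)) := by
  obtain rfl : fAinv = fiberInf D A f :=
    funext fun x => (hfAinv x).trans (sInf_fiber_eq_fiberInf D A f x)
  exact ⟨TQuasiconvexOn.comp_of_commute hf hA, fun T hT x _ y _ =>
    TQuasiconvexOn.fiberInf_of_commute hD hf hA T hT x trivial y trivial⟩

/-- If `A` commutes with every member of `𝒯` and `f` is `𝒯`-quasiconvex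
on the `𝒯`-convex set `D`, then `f ∘ A` is `𝒯`-quasiconvex on `A⁻¹(D)` and
`f ∘ A⁻¹` (defined via an infimum) is `𝒯`-quasiconvex on `A(D)`. -/
theorem stmt5 {X : Type*} [AddCommGroup X] (𝒯 : Set (X →+ X)) (D : Set X)
    (hD : ∀ T ∈ 𝒯, ∀ x ∈ D, ∀ y ∈ D, T x + (y - T y) ∈ D)
    (f : X → EReal) (hftop : ∀ x ∈ D, f x ≠ ⊤)
    (hf : ∀ T ∈ 𝒯, ∀ x ∈ D, ∀ y ∈ D, f (T x + (y - T y)) ≤ max (f x) (f y))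
    (A : X →+ X) (hA : ∀ T ∈ 𝒯, ∀ x : X, A (T x) = T (A x))
    (fAinv : X → EReal)
    (hfAinv : ∀ x, fAinv x = sInf {m : EReal | ∃ u ∈ D, A u = x ∧ m = f u}) :
    (∀ T ∈ 𝒯, ∀ x ∈ A ⁻¹' D, ∀ y ∈ A ⁻¹' D,
      f (A (T x + (y - T y))) ≤ max (f (A x)) (f (A y))) ∧
    (∀ T ∈ 𝒯, ∀ x ∈ A '' D, ∀ y ∈ A '' D,
      fAinv (T x + (y - T y)) ≤ max (fAinv x) (fAinv y)) :=
  stmt5_general 𝒯 D hD f hf A hA fAinv hfAinv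
end

section
/- Let (X,+,d) be a uniquely 2-divisible metric abelian group (d a translation-invariant metric), T a d-bounded endomorphism with spectral radius ρ_d(2·T − I) < 1, and D ⊆ X a closed T-convex set. Then every lower semicontinuous T-quasiconvex function f : D → [-∞,+∞) is midpoint quasiconvex, i.e., f((x+y)/2) ≤ max(f(x), f(y)) for all x, y ∈ D. -/
/-!
Write `S = 2T - I`. Since `T (m + u) + ((m - u) - T (m - u)) = m + S u`, and symmetrically with
`u` replaced by `-u`, a `T`-convex set containing `m ± u` also contains `m ± S u`. Starting from
`x = m + u`, `y = m - u`, the points `m + Sⁿ u` therefore stay in `D`; as `ρ_d(S) < 1` they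
converge to `m`, so `m ∈ D` when `D` is closed. Applied to the sublevel set
`D ∩ {f ≤ max (f x) (f y)}`, which is closed by lower semicontinuity and `T`-convex by
`T`-quasiconvexity, this gives midpoint quasiconvexity.
-/

/-- The `d`-norm of a self-map of a metric abelian group: the infimum of those
nonnegative constants `c` with `dist (g x) 0 ≤ c * dist x 0` for all `x`. -/
noncomputable def dnormF {X : Type*} [AddCommGroup X] [MetricSpace X] (g : X → X) : ℝ :=
  sInf {c : ℝ | 0 ≤ c ∧ ∀ x : X, dist (g x) 0 ≤ c * dist x 0}

open Filter Topology Set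

theorem LowerSemicontinuousOn.isClosed_inter_preimage_Iic {α γ : Type*} [TopologicalSpace α]
    [LinearOrder γ] {f : α → γ} {s : Set α} (hf : LowerSemicontinuousOn f s) (hs : IsClosed s)
    (y : γ) : IsClosed (s ∩ f ⁻¹' Iic y) := by
  obtain ⟨v, hv, heq⟩ := lowerSemicontinuousOn_iff_preimage_Iic.1 hf y
  rw [heq]
  exact hs.inter hv

section DNorm

variable {X : Type*} [AddCommGroup X] [MetricSpace X]

theorem dnormF_nonneg (g : X → X) : 0 ≤ dnormF g :=
  Real.sInf_nonneg fun _ hc => hc.1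

theorem dnormF_le {g : X → X} {c : ℝ} (hc : 0 ≤ c) (hg : ∀ x, dist (g x) 0 ≤ c * dist x 0) :
    dnormF g ≤ c :=
  csInf_le ⟨0, fun _ hb => hb.1⟩ ⟨hc, hg⟩

theorem dist_le_dnormF_mul {g : X → X} (hg : ∃ c, 0 ≤ c ∧ ∀ x, dist (g x) 0 ≤ c * dist x 0)
    (x : X) : dist (g x) 0 ≤ dnormF g * dist x 0 := by
  rcases eq_or_ne x 0 with rfl | hx
  · obtain ⟨c, -, hc⟩ := hg
    simpa using hc 0
  have hpos : 0 < dist x 0 := dist_pos.2 hx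
  have hquot : dist (g x) 0 / dist x 0 ≤ dnormF g :=
    le_csInf hg fun c hc => (div_le_iff₀ hpos).2 (hc.2 x)
  exact (div_le_iff₀ hpos).1 hquot

theorem dist_iterate_le_pow_mul {g : X → X} {c : ℝ} (hc : 0 ≤ c)
    (hg : ∀ x, dist (g x) 0 ≤ c * dist x 0) (n : ℕ) (x : X) :
    dist (g^[n] x) 0 ≤ c ^ n * dist x 0 := by
  induction n with
  | zero => simp
  | succ n ih =>
    rw [Function.iterate_succ_apply', pow_succ', mul_assoc]
    exact (hg _).trans (mul_le_mul_of_nonneg_left ih hc)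

theorem isBoundedUnder_dnormF_iterate_rpow {g : X → X} {c : ℝ} (hc : 0 ≤ c)
    (hg : ∀ x, dist (g x) 0 ≤ c * dist x 0) :
    IsBoundedUnder (· ≤ ·) atTop fun n : ℕ => dnormF (g^[n]) ^ ((1 : ℝ) / n) := by
  refine isBoundedUnder_of ⟨max c 1, fun n => ?_⟩
  rcases eq_or_ne n 0 with rfl | hn
  · simp
  calc dnormF (g^[n]) ^ ((1 : ℝ) / n)
      ≤ (c ^ n) ^ ((n : ℝ)⁻¹) := by
        rw [one_div]
        exact Real.rpow_le_rpow (dnormF_nonneg _)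
          (dnormF_le (by positivity) (dist_iterate_le_pow_mul hc hg n)) (by positivity)
    _ = c := Real.pow_rpow_inv_natCast hc hn
    _ ≤ max c 1 := le_max_left _ _

theorem exists_dnormF_iterate_le_pow {g : X → X} {c : ℝ} (hc : 0 ≤ c)
    (hg : ∀ x, dist (g x) 0 ≤ c * dist x 0)
    (hρ : limsup (fun n : ℕ => dnormF (g^[n]) ^ ((1 : ℝ) / n)) atTop < 1) :
    ∃ r, 0 ≤ r ∧ r < 1 ∧ ∀ᶠ n in atTop, dnormF (g^[n]) ≤ r ^ n := by
  obtain ⟨r, hr, hr1⟩ := exists_between (max_lt hρ one_pos)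
  refine ⟨r, (le_max_right _ _).trans hr.le, hr1, ?_⟩
  filter_upwards [eventually_lt_of_limsup_lt ((le_max_left _ _).trans_lt hr)
    (isBoundedUnder_dnormF_iterate_rpow hc hg), eventually_ne_atTop 0] with n hlt hn
  rw [one_div] at hlt
  calc dnormF (g^[n]) = (dnormF (g^[n]) ^ ((n : ℝ)⁻¹)) ^ n :=
        (Real.rpow_inv_natCast_pow (dnormF_nonneg _) hn).symm
    _ ≤ r ^ n := pow_le_pow_left₀ (Real.rpow_nonneg (dnormF_nonneg _) _) hlt.le n

theorem tendsto_iterate_nhds_zero_of_limsup_dnormF_lt_one {g : X → X} {c : ℝ} (hc : 0 ≤ c)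
    (hg : ∀ x, dist (g x) 0 ≤ c * dist x 0)
    (hρ : limsup (fun n : ℕ => dnormF (g^[n]) ^ ((1 : ℝ) / n)) atTop < 1) (x : X) :
    Tendsto (fun n => g^[n] x) atTop (𝓝 0) := by
  obtain ⟨r, hr0, hr1, hev⟩ := exists_dnormF_iterate_le_pow hc hg hρ
  rw [tendsto_iff_dist_tendsto_zero]
  have hgeom : Tendsto (fun n : ℕ => r ^ n * dist x 0) atTop (𝓝 0) := by
    simpa using (tendsto_pow_atTop_nhds_zero_of_lt_one hr0 hr1).mul_const (dist x 0)
  refine squeeze_zero' (Eventually.of_forall fun _ => dist_nonneg) ?_ hgeom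
  filter_upwards [hev] with n hn
  exact (dist_le_dnormF_mul ⟨c ^ n, by positivity, dist_iterate_le_pow_mul hc hg n⟩ x).trans
    (mul_le_mul_of_nonneg_right hn dist_nonneg)

end DNorm

section TConvex

variable {X : Type*} [AddCommGroup X]

def IsTConvex (T : X →+ X) (D : Set X) : Prop :=
  ∀ x ∈ D, ∀ y ∈ D, T x + (y - T y) ∈ D

theorem IsTConvex.inter_preimage_Iic {T : X →+ X} {D : Set X} (hD : IsTConvex T D)
    {γ : Type*} [LinearOrder γ] {f : X → γ}
    (hf : ∀ x ∈ D, ∀ y ∈ D, f (T x + (y - T y)) ≤ max (f x) (f y)) (a : γ) :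
    IsTConvex T (D ∩ f ⁻¹' Iic a) :=
  fun x hx y hy => ⟨hD x hx.1 y hy.1, (hf x hx.1 y hy.1).trans (max_le hx.2 hy.2)⟩

theorem IsTConvex.add_sub_iterate_mem {T : X →+ X} {D : Set X} (hD : IsTConvex T D) {m u : X}
    (hp : m + u ∈ D) (hn : m - u ∈ D) (n : ℕ) :
    m + (fun x => T x + T x - x)^[n] u ∈ D ∧ m - (fun x => T x + T x - x)^[n] u ∈ D := by
  induction n with
  | zero => exact ⟨hp, hn⟩
  | succ n ih =>
    set v := (fun x => T x + T x - x)^[n] u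
    have hplus : m + (T v + T v - v) = T (m + v) + ((m - v) - T (m - v)) := by
      simp only [map_add, map_sub]; abel
    have hminus : m - (T v + T v - v) = T (m - v) + ((m + v) - T (m + v)) := by
      simp only [map_add, map_sub]; abel
    rw [Function.iterate_succ_apply', hplus, hminus]
    exact ⟨hD _ ih.1 _ ih.2, hD _ ih.2 _ ih.1⟩

section IsometricAdd

variable [MetricSpace X] [IsIsometricVAdd X X]

theorem dist_add_zero_le (a b : X) : dist (a + b) 0 ≤ dist a 0 + dist b 0 :=
  calc dist (a + b) 0 ≤ dist (a + b) (a + 0) + dist a 0 := by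
        simpa only [add_zero] using dist_triangle (a + b) a 0
    _ = dist a 0 + dist b 0 := by rw [dist_add_left, add_comm]

theorem dist_neg_zero (a : X) : dist (-a) 0 = dist a 0 := by
  rw [← neg_zero, dist_neg_neg, neg_zero]

theorem dist_two_mul_sub_self_le {T : X →+ X} {c : ℝ} (hT : ∀ x, dist (T x) 0 ≤ c * dist x 0)
    (x : X) : dist (T x + T x - x) 0 ≤ (2 * c + 1) * dist x 0 := by
  have htri := (dist_add_zero_le (T x + T x) (-x)).trans
    (add_le_add_left (dist_add_zero_le (T x) (T x)) _)
  rw [← sub_eq_add_neg, dist_neg_zero] at htri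
  linarith [hT x]

theorem IsTConvex.mem_of_add_self_eq_add {T : X →+ X} {D : Set X} (hD : IsTConvex T D)
    (hDcl : IsClosed D) {c : ℝ} (hc : 0 ≤ c)
    (hT : ∀ x, dist (T x) 0 ≤ c * dist x 0)
    (hρ : limsup (fun n : ℕ => dnormF ((fun z : X => T z + T z - z)^[n]) ^ ((1 : ℝ) / n))
      atTop < 1)
    {x y m : X} (hx : x ∈ D) (hy : y ∈ D) (hm : m + m = x + y) : m ∈ D := by
  have hlim : Tendsto (fun n => m + (fun z : X => T z + T z - z)^[n] (x - m)) atTop (𝓝 m) := by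
    simpa using (tendsto_iterate_nhds_zero_of_limsup_dnormF_lt_one (by positivity)
      (dist_two_mul_sub_self_le hT) hρ (x - m)).const_vadd m
  have hxm : m + (x - m) = x := add_sub_cancel m x
  have hym : m - (x - m) = y := by rw [sub_sub_eq_add_sub, hm, add_sub_cancel_left]
  exact hDcl.mem_of_tendsto hlim <| Eventually.of_forall fun n =>
    (hD.add_sub_iterate_mem (hxm.symm ▸ hx) (hym.symm ▸ hy) n).1

end IsometricAdd

end TConvex

theorem stmt7_general {X : Type*} [AddCommGroup X] [MetricSpace X]
    (hinv : ∀ x y z : X, dist (x + z) (y + z) = dist x y)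
    (T : X →+ X)
    (hTb : ∃ c : ℝ, 0 ≤ c ∧ ∀ x : X, dist (T x) 0 ≤ c * dist x 0)
    (hrho : Filter.limsup
      (fun m : ℕ => (dnormF ((fun x : X => T x + T x - x)^[m])) ^ ((1 : ℝ) / (m : ℝ)))
      Filter.atTop < 1)
    (D : Set X) (hDcl : IsClosed D)
    (hD : ∀ x ∈ D, ∀ y ∈ D, T x + (y - T y) ∈ D)
    (f : X → EReal)
    (hlsc : LowerSemicontinuousOn f D)
    (hqc : ∀ x ∈ D, ∀ y ∈ D, f (T x + (y - T y)) ≤ max (f x) (f y)) :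
    ∀ x ∈ D, ∀ y ∈ D, ∀ m : X, m + m = x + y → f m ≤ max (f x) (f y) := by
  have : IsIsometricVAdd X X :=
    ⟨fun c => Isometry.of_dist_eq fun x y => by
      simpa only [vadd_eq_add, add_comm c] using hinv x y c⟩
  obtain ⟨c, hc, hTc⟩ := hTb
  intro x hx y hy m hm
  have hsub : IsTConvex T (D ∩ f ⁻¹' Iic (max (f x) (f y))) :=
    IsTConvex.inter_preimage_Iic hD hqc _
  exact (hsub.mem_of_add_self_eq_add (hlsc.isClosed_inter_preimage_Iic hDcl _) hc hTc hrho
    ⟨hx, (le_max_left (f x) (f y) :)⟩ ⟨hy, (le_max_right (f x) (f y) :)⟩ hm).2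

/-- In a uniquely 2-divisible metric abelian group, if `T` is a
`d`-bounded endomorphism with `ρ_d(2T − I) < 1` and `D` is a closed `T`-convex
set, then every lower semicontinuous `T`-quasiconvex `f : D → [-∞,∞)` is
midpoint quasiconvex. -/
theorem stmt7 {X : Type*} [AddCommGroup X] [MetricSpace X]
    (hinv : ∀ x y z : X, dist (x + z) (y + z) = dist x y)
    (hdiv2 : Function.Bijective (fun x : X => x + x))
    (T : X →+ X)
    (hTb : ∃ c : ℝ, 0 ≤ c ∧ ∀ x : X, dist (T x) 0 ≤ c * dist x 0)
    (hrho : Filter.limsup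
      (fun m : ℕ => (dnormF ((fun x : X => T x + T x - x)^[m])) ^ ((1 : ℝ) / (m : ℝ)))
      Filter.atTop < 1)
    (D : Set X) (hDcl : IsClosed D)
    (hD : ∀ x ∈ D, ∀ y ∈ D, T x + (y - T y) ∈ D)
    (f : X → EReal) (hftop : ∀ x ∈ D, f x ≠ ⊤)
    (hlsc : LowerSemicontinuousOn f D)
    (hqc : ∀ x ∈ D, ∀ y ∈ D, f (T x + (y - T y)) ≤ max (f x) (f y)) :
    ∀ x ∈ D, ∀ y ∈ D, ∀ m : X, m + m = x + y → f m ≤ max (f x) (f y) :=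
  stmt7_general hinv T hTb hrho D hDcl hD f hlsc hqc
end
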